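/- For every ε > 0 there exists n₀ = n₀(ε) such that for all n ≥ n₀ and all distinct i, j ∈ [n]: ∑_{v ∈ [n] \ {i,j}} π_c(λ)² (1 − e^{−w_i w_v/ℓ_n})(1 − e^{−w_v w_j/ℓ_n}) ≤ (1+ε) λ² h(i,j), where the threshold n₀ does not depend on λ > 0 or on i, j. -/

import Mathlib

open MeasureTheory Real Filter
open scoped ENNReal NNReal

noncomputable section

/-- `α = 1/(τ−1)`. -/
def alphaOf (τ : ℝ) : ℝ := 1 / (τ - 1)

/-- `μ = c_F/(1−α)`. -/
def muOf (τ cF : ℝ) : ℝ := cF / (1 - alphaOf τ)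

/-- `A_α = ∫_0^∞ (1 − e^{−z}) z^{−1/α} dz`. -/
def AalphaOf (τ : ℝ) : ℝ :=
  ∫ z in Set.Ioi (0 : ℝ), (1 - Real.exp (-z)) * z ^ (-(1 / alphaOf τ))

/-- `B_α = c_F^{2/α} A_α/(α μ^{1/α})`. -/
def BalphaOf (τ cF : ℝ) : ℝ :=
  cF ^ (2 / alphaOf τ) * AalphaOf τ / (alphaOf τ * muOf τ cF ^ (1 / alphaOf τ))

/-- `λ_c = √(η/(4B_α))` with `η = 2α−1`. -/
def lambdaC (τ cF : ℝ) : ℝ :=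
  Real.sqrt ((2 * alphaOf τ - 1) / (4 * BalphaOf τ cF))

/-- `h(x,y) = B_α (min x y)^{−(1−α)} (max x y)^{−α}`. -/
def hOf (τ cF : ℝ) (x y : ℝ) : ℝ :=
  BalphaOf τ cF * (min x y) ^ (-(1 - alphaOf τ)) * (max x y) ^ (-alphaOf τ)

/-- `θ_i = c_F i^{−α}/μ`. -/
def thetaOf (τ cF : ℝ) (i : ℕ) : ℝ := cF * (i : ℝ) ^ (-alphaOf τ) / muOf τ cF

/-- `Θ_i(x) = 1 − exp(−c_F θ_i x^{−α})`. -/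
def ThetaOf (τ cF : ℝ) (i : ℕ) (x : ℝ) : ℝ :=
  1 - Real.exp (-(cF * thetaOf τ cF i * x ^ (-alphaOf τ)))

/-- `λ_{ij} = λ² ∫_0^∞ Θ_i(x) Θ_j(x) dx`. -/
def lamIJ (τ cF lam : ℝ) (i j : ℕ) : ℝ :=
  lam ^ 2 * ∫ x in Set.Ioi (0 : ℝ), ThetaOf τ cF i x * ThetaOf τ cF j x

/-- The weight `w_i = c_F (n/i)^α` of vertex `i ∈ [n]`. -/
def wFn (τ cF : ℝ) (n i : ℕ) : ℝ := cF * ((n : ℝ) / (i : ℝ)) ^ alphaOf τ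

/-- The total weight `ℓ_n = ∑_{i ∈ [n]} w_i`. -/
def ellFn (τ cF : ℝ) (n : ℕ) : ℝ := ∑ i ∈ Finset.Icc 1 n, wFn τ cF n i

/-- The critical percolation probability `π_c(λ) = λ n^{−(3−τ)/2}`. -/
def piC (τ lam : ℝ) (n : ℕ) : ℝ := lam * (n : ℝ) ^ (-((3 - τ) / 2))

/-!
Write `w_u = c_F n^α u^{-α}` and `K = c_F² n^{2α} / ℓ_n`, so that the `v`-th summand is
`π_c² (1 - e^{-K i^{-α} v^{-α}}) (1 - e^{-K j^{-α} v^{-α}})`. For `i ≤ j` bound the second factor by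
`K j^{-α} v^{-α}`: what is left is the decreasing function `x ↦ (1 - e^{-a x^{-α}}) x^{-α}` with
`a = K i^{-α}`, whose sum over `v ≥ 1` is at most its integral over `(0, ∞)`, and that integral is
`a^{(1-α)/α} A_α / α` by scaling. Collecting powers of `n` turns the bound into
`λ² (μ n / ℓ_n)^{1/α} h(i, j)`. Finally `∑_{u ≤ n} u^{-α} ≥ ∫_1^n x^{-α} dx` gives
`ℓ_n ≥ μ (n - n^α)`, so `(μ n / ℓ_n)^{1/α} ≤ 1 + ε` for large `n`, uniformly in `λ, i, j`.
-/

open Topology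

lemma one_sub_exp_neg_nonneg {x : ℝ} (hx : 0 ≤ x) : 0 ≤ 1 - exp (-x) := by
  linarith [exp_le_one_iff.mpr (neg_nonpos.mpr hx)]

lemma one_sub_exp_neg_le (x : ℝ) : 1 - exp (-x) ≤ x := by
  linarith [add_one_le_exp (-x)]

lemma AntitoneOn.sum_Icc_le_intervalIntegral {f : ℝ → ℝ} (hf : AntitoneOn f (Set.Ioi 0))
    (hint : IntegrableOn f (Set.Ioi 0)) (n : ℕ) :
    ∑ v ∈ Finset.Icc 1 n, f v ≤ ∫ x in (0 : ℝ)..n, f x := by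
  have hii : ∀ a b : ℝ, 0 ≤ a → a ≤ b → IntervalIntegrable f volume a b := fun a b ha hab =>
    (intervalIntegrable_iff_integrableOn_Ioc_of_le hab).mpr
      (hint.mono_set fun x hx => ha.trans_lt hx.1)
  induction n with
  | zero => simp
  | succ n ih =>
    have hn : (0 : ℝ) ≤ n := n.cast_nonneg
    have hstep : f (n + 1) ≤ ∫ x in (n : ℝ)..n + 1, f x := by
      simpa using intervalIntegral.integral_mono_on_of_le_Ioo (by linarith)
        intervalIntegrable_const (hii n (n + 1) hn (by linarith))
        fun x hx => hf (hn.trans_lt hx.1) (by simp; linarith) hx.2.le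
    rw [Finset.sum_Icc_succ_top (by omega), Nat.cast_succ,
      ← intervalIntegral.integral_add_adjacent_intervals (hii 0 n le_rfl hn)
        (hii n (n + 1) hn (by linarith))]
    linarith

lemma AntitoneOn.sum_Icc_le_integral_Ioi {f : ℝ → ℝ} (hf : AntitoneOn f (Set.Ioi 0))
    (hint : IntegrableOn f (Set.Ioi 0)) (hnonneg : ∀ x ∈ Set.Ioi (0 : ℝ), 0 ≤ f x) (n : ℕ) :
    ∑ v ∈ Finset.Icc 1 n, f v ≤ ∫ x in Set.Ioi 0, f x := by
  refine (hf.sum_Icc_le_intervalIntegral hint n).trans ?_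
  rw [intervalIntegral.integral_of_le n.cast_nonneg]
  exact setIntegral_mono_set hint (ae_restrict_of_forall_mem measurableSet_Ioi hnonneg)
    Set.Ioc_subset_Ioi_self.eventuallyLE

lemma rpow_one_sub_sub_one_le_sum_Icc_rpow_neg {α : ℝ} (hα0 : 0 ≤ α) (hα1 : α < 1) (n : ℕ) :
    (n : ℝ) ^ (1 - α) - 1 ≤ (1 - α) * ∑ i ∈ Finset.Icc 1 n, (i : ℝ) ^ (-α) := by
  have hanti : AntitoneOn (fun x : ℝ => x ^ (-α)) (Set.Icc ((1 : ℕ) : ℝ) (n + 1 : ℕ)) :=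
    fun x hx y _ hxy => rpow_le_rpow_of_nonpos (by simp at hx; linarith [hx.1]) hxy (by linarith)
  have hint := hanti.integral_le_sum_Ico (a := 1) (b := n + 1) (by omega)
  rw [integral_rpow (Or.inl (by linarith)), Finset.Ico_add_one_right_eq_Icc, Nat.cast_one,
    one_rpow] at hint
  have hmono : (n : ℝ) ^ (1 - α) ≤ ((n + 1 : ℕ) : ℝ) ^ (1 - α) :=
    rpow_le_rpow n.cast_nonneg (by simp) (by linarith)
  rw [show -α + 1 = 1 - α by ring, div_le_iff₀ (by linarith)] at hint
  push_cast at hint hmono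
  nlinarith

def expKernel (α a x : ℝ) : ℝ := (1 - exp (-(a * x ^ (-α)))) * x ^ (-α)

section expKernel

variable {α a x : ℝ}

lemma expKernel_nonneg (ha : 0 ≤ a) (hx : 0 ≤ x) : 0 ≤ expKernel α a x := by
  have := rpow_nonneg hx (-α)
  exact mul_nonneg (one_sub_exp_neg_nonneg (by positivity)) this

lemma antitoneOn_expKernel (hα : 0 ≤ α) (ha : 0 ≤ a) : AntitoneOn (expKernel α a) (Set.Ioi 0) :=
  fun x hx y _ hxy => by
    have hxy' : y ^ (-α) ≤ x ^ (-α) := rpow_le_rpow_of_nonpos hx hxy (by linarith)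
    have hy : 0 ≤ y ^ (-α) := rpow_nonneg (le_trans (le_of_lt hx) hxy) _
    have : 0 ≤ x ^ (-α) := rpow_nonneg (le_of_lt hx) _
    unfold expKernel
    gcongr
    exact one_sub_exp_neg_nonneg (by positivity)

lemma continuousOn_expKernel : ContinuousOn (expKernel α a) (Set.Ioi 0) := by
  have hc : ContinuousOn (fun x : ℝ => x ^ (-α)) (Set.Ioi 0) :=
    fun x hx => (continuousAt_rpow_const x (-α) (Or.inl (ne_of_gt hx))).continuousWithinAt
  exact (continuousOn_const.sub (continuous_exp.comp_continuousOn
    (continuousOn_const.mul hc).neg)).mul hc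

lemma integrableOn_expKernel (hα : 1 / 2 < α) (hα1 : α < 1) (ha : 0 ≤ a) :
    IntegrableOn (expKernel α a) (Set.Ioi 0) := by
  rw [← Set.Ioc_union_Ioi_eq_Ioi zero_le_one]
  refine IntegrableOn.union ?_ ?_
  · have hg : IntegrableOn (fun x : ℝ => x ^ (-α)) (Set.Ioc 0 1) := by
      simpa [intervalIntegrable_iff, Set.uIoc_of_le zero_le_one] using
        intervalIntegral.intervalIntegrable_rpow' (a := 0) (b := 1) (r := -α) (by linarith)
    refine hg.mono' ((continuousOn_expKernel.mono Set.Ioc_subset_Ioi_self).aestronglyMeasurable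
      measurableSet_Ioc) (ae_restrict_of_forall_mem measurableSet_Ioc fun x hx => ?_)
    have hx0 := rpow_nonneg hx.1.le (-α)
    rw [norm_of_nonneg (expKernel_nonneg ha hx.1.le)]
    exact mul_le_of_le_one_left hx0 (by linarith [exp_pos (-(a * x ^ (-α)))])
  · have hg : IntegrableOn (fun x : ℝ => a * x ^ (-(2 * α))) (Set.Ioi 1) :=
      (integrableOn_Ioi_rpow_of_lt (by linarith) one_pos).const_mul a
    refine hg.mono'
      ((continuousOn_expKernel.mono (Set.Ioi_subset_Ioi zero_le_one)).aestronglyMeasurable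
        measurableSet_Ioi) (ae_restrict_of_forall_mem measurableSet_Ioi fun x hx => ?_)
    have hx0 : (0 : ℝ) < x := one_pos.trans hx
    rw [norm_of_nonneg (expKernel_nonneg ha hx0.le), show -(2 * α) = -α + -α by ring,
      rpow_add hx0, ← mul_assoc]
    exact mul_le_mul_of_nonneg_right (one_sub_exp_neg_le _) (rpow_nonneg hx0.le _)

lemma integral_expKernel_one (hα : 0 < α) :
    ∫ x in Set.Ioi 0, expKernel α 1 x
      = α⁻¹ * ∫ z in Set.Ioi 0, (1 - exp (-z)) * z ^ (-(1 / α)) := by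
  rw [← integral_const_mul, ← integral_comp_rpow_Ioi
    (fun z => α⁻¹ * ((1 - exp (-z)) * z ^ (-(1 / α)))) (neg_ne_zero.mpr hα.ne')]
  refine setIntegral_congr_fun measurableSet_Ioi fun x (hx : 0 < x) => ?_
  have hinv : (x ^ (-α)) ^ (-(1 / α)) = x := by
    rw [← rpow_mul hx.le, show -α * -(1 / α) = 1 by field_simp, rpow_one]
  have hpow : x ^ (-α - 1) * x = x ^ (-α) := by
    rw [rpow_sub_one hx.ne']; field_simp
  simp only [expKernel, smul_eq_mul, one_mul, abs_neg, abs_of_pos hα, hinv]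
  rw [← hpow]
  field_simp

lemma integral_expKernel (hα : 0 < α) (ha : 0 < a) :
    ∫ x in Set.Ioi 0, expKernel α a x
      = a ^ ((1 - α) / α) * (α⁻¹ * ∫ z in Set.Ioi 0, (1 - exp (-z)) * z ^ (-(1 / α))) := by
  have hb : 0 < a ^ α⁻¹ := rpow_pos_of_pos ha _
  have hscale : ∀ x ∈ Set.Ioi (0 : ℝ), expKernel α a (a ^ α⁻¹ * x) = a⁻¹ * expKernel α 1 x := by
    intro x (hx : 0 < x)
    have h : (a ^ α⁻¹ * x) ^ (-α) = a⁻¹ * x ^ (-α) := by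
      rw [mul_rpow hb.le hx.le, ← rpow_mul ha.le, show α⁻¹ * -α = -1 by field_simp, rpow_neg_one]
    simp only [expKernel, h, one_mul, ← mul_assoc, mul_inv_cancel₀ ha.ne']
    ring
  have hcomp := integral_comp_mul_left_Ioi (expKernel α a) 0 hb
  rw [setIntegral_congr_fun measurableSet_Ioi hscale, integral_const_mul, mul_zero,
    smul_eq_mul, integral_expKernel_one hα] at hcomp
  have hexp : a ^ ((1 - α) / α) = a ^ α⁻¹ * a⁻¹ := by
    rw [← rpow_neg_one a, ← rpow_add ha]; congr 1; field_simp; ring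
  rw [hexp, mul_assoc, hcomp]
  field_simp

end expKernel

lemma rpow_one_div_sub_two_mul_mul_rpow {α c N L x : ℝ} (hα : α ≠ 0) (hN : 0 < N) (hL : 0 < L)
    (hx : 0 ≤ x) :
    let K := (c * N ^ α) ^ 2 / L
    N ^ (1 / α - 2) * K * (K * x ^ (-α)) ^ ((1 - α) / α)
      = (c ^ 2 * N / L) ^ (1 / α) * x ^ (-(1 - α)) := by
  intro K
  have hK : 0 ≤ K := by positivity
  have hKpow : K * K ^ ((1 - α) / α) = K ^ (1 / α) := by
    rw [← rpow_one_add' hK (by field_simp; simpa using hα)]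
    congr 1; field_simp; ring
  have hNK : N ^ (1 - 2 * α) * K = c ^ 2 * N / L := by
    have : N ^ (1 - 2 * α) * (N ^ α) ^ 2 = N := by
      rw [← rpow_natCast, ← rpow_mul hN.le, ← rpow_add hN]; ring_nf; exact rpow_one N
    simp only [K]
    linear_combination (c ^ 2 / L) * this
  have hN' : N ^ (1 / α - 2) = (N ^ (1 - 2 * α)) ^ (1 / α) := by
    rw [← rpow_mul hN.le]; congr 1; field_simp
  rw [mul_rpow hK (rpow_nonneg hx _), ← rpow_mul hx, mul_assoc, ← mul_assoc K, hKpow, hN',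
    ← mul_assoc, ← mul_rpow (rpow_nonneg hN.le _) hK, hNK]
  congr 2
  field_simp

lemma alphaOf_mem_Ioo {τ : ℝ} (hτ : τ ∈ Set.Ioo 2 3) : alphaOf τ ∈ Set.Ioo (1 / 2) 1 := by
  obtain ⟨h2, h3⟩ := hτ
  constructor <;> rw [alphaOf]
  · rw [lt_div_iff₀ (by linarith)]; linarith
  · rw [div_lt_one (by linarith)]; linarith

lemma one_div_alphaOf (τ : ℝ) : 1 / alphaOf τ = τ - 1 := by
  rw [alphaOf, one_div_one_div]

lemma wFn_eq (τ cF : ℝ) (n u : ℕ) :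
    wFn τ cF n u = cF * (n : ℝ) ^ alphaOf τ * (u : ℝ) ^ (-alphaOf τ) := by
  rw [wFn, div_rpow n.cast_nonneg u.cast_nonneg, rpow_neg u.cast_nonneg, div_eq_mul_inv,
    mul_assoc]

lemma ellFn_eq (τ cF : ℝ) (n : ℕ) :
    ellFn τ cF n = cF * (n : ℝ) ^ alphaOf τ * ∑ i ∈ Finset.Icc 1 n, (i : ℝ) ^ (-alphaOf τ) := by
  simp only [ellFn, wFn_eq, Finset.mul_sum]

lemma piC_sq (τ lam : ℝ) (n : ℕ) :
    piC τ lam n ^ 2 = lam ^ 2 * (n : ℝ) ^ (1 / alphaOf τ - 2) := by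
  rw [piC, mul_pow, ← rpow_natCast (_ ^ _) 2, ← rpow_mul n.cast_nonneg, one_div_alphaOf]
  congr 2
  push_cast; ring

def twoPathSum (τ cF lam : ℝ) (n i j : ℕ) : ℝ :=
  ∑ v ∈ Finset.Icc 1 n \ {i, j},
    piC τ lam n ^ 2 *
      (1 - Real.exp (-(wFn τ cF n i * wFn τ cF n v / ellFn τ cF n))) *
      (1 - Real.exp (-(wFn τ cF n v * wFn τ cF n j / ellFn τ cF n)))

lemma twoPathSum_comm (τ cF lam : ℝ) (n i j : ℕ) :
    twoPathSum τ cF lam n i j = twoPathSum τ cF lam n j i := by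
  rw [twoPathSum, twoPathSum, Finset.pair_comm]
  refine Finset.sum_congr rfl fun v _ => ?_
  rw [mul_comm (wFn τ cF n j), mul_comm (wFn τ cF n v) (wFn τ cF n i), mul_right_comm]

section

variable {τ cF : ℝ}

lemma ellFn_pos (hcF : 0 < cF) {n : ℕ} (hn : 1 ≤ n) : 0 < ellFn τ cF n := by
  rw [ellFn_eq]
  have : 0 < ∑ i ∈ Finset.Icc 1 n, (i : ℝ) ^ (-alphaOf τ) :=
    Finset.sum_pos (fun i hi => rpow_pos_of_pos (by simp at hi; exact_mod_cast hi.1) _)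
      ⟨1, by simp [hn]⟩
  have : (0 : ℝ) < n := by exact_mod_cast hn
  positivity

lemma muOf_mul_sub_rpow_le_ellFn (hτ : τ ∈ Set.Ioo 2 3) (hcF : 0 ≤ cF) (n : ℕ) :
    muOf τ cF * (n - (n : ℝ) ^ alphaOf τ) ≤ ellFn τ cF n := by
  obtain ⟨hα12, hα1⟩ := alphaOf_mem_Ioo hτ
  set α := alphaOf τ
  have hsplit : (n : ℝ) = (n : ℝ) ^ α * (n : ℝ) ^ (1 - α) := by
    rw [← rpow_add' n.cast_nonneg (by norm_num), add_sub_cancel, rpow_one]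
  have hsum := rpow_one_sub_sub_one_le_sum_Icc_rpow_neg (by linarith) hα1 n
  rw [ellFn_eq, muOf, div_mul_eq_mul_div, div_le_iff₀ (by linarith)]
  calc cF * ((n : ℝ) - (n : ℝ) ^ α)
      = cF * (n : ℝ) ^ α * ((n : ℝ) ^ (1 - α) - 1) := by linear_combination cF * hsplit
    _ ≤ cF * (n : ℝ) ^ α * ((1 - α) * ∑ i ∈ Finset.Icc 1 n, (i : ℝ) ^ (-α)) := by gcongr
    _ = _ := by ring

lemma eventually_rpow_muOf_mul_div_ellFn_le (hτ : τ ∈ Set.Ioo 2 3) (hcF : 0 < cF) {ε : ℝ}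
    (hε : 0 < ε) :
    ∀ᶠ n : ℕ in atTop, (muOf τ cF * n / ellFn τ cF n) ^ (1 / alphaOf τ) ≤ 1 + ε := by
  obtain ⟨hα12, hα1⟩ := alphaOf_mem_Ioo hτ
  have hell := muOf_mul_sub_rpow_le_ellFn hτ hcF.le
  set α := alphaOf τ
  have hμ : 0 < muOf τ cF := div_pos hcF (by linarith)
  have hlim : Tendsto (fun n : ℕ => ((1 - (n : ℝ) ^ (α - 1))⁻¹) ^ (1 / α)) atTop (𝓝 1) := by
    have h0 : Tendsto (fun n : ℕ => (n : ℝ) ^ (α - 1)) atTop (𝓝 0) := by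
      simpa [Function.comp_def] using (tendsto_rpow_neg_atTop (by linarith : 0 < 1 - α)).comp
        tendsto_natCast_atTop_atTop
    simpa using ((tendsto_const_nhds.sub h0).inv₀ (by norm_num)).rpow_const
      (Or.inl (by norm_num) : (1 - 0 : ℝ)⁻¹ ≠ 0 ∨ _)
  filter_upwards [hlim.eventually_le_const (lt_add_of_pos_right 1 hε), eventually_ge_atTop 2]
    with n hlt hn
  have hN : (1 : ℝ) < n := by exact_mod_cast hn
  have hgap : 0 < 1 - (n : ℝ) ^ (α - 1) :=
    sub_pos.mpr (rpow_lt_one_of_one_lt_of_neg hN (by linarith))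
  have hlow : (1 - (n : ℝ) ^ (α - 1)) * (muOf τ cF * n) ≤ ellFn τ cF n := by
    refine le_of_eq_of_le ?_ (hell n)
    rw [rpow_sub_one (by positivity)]
    field_simp
  have hℓ : 0 < ellFn τ cF n := lt_of_lt_of_le (by positivity) hlow
  refine le_trans (rpow_le_rpow (by positivity) ?_ (by positivity)) hlt
  rw [div_le_iff₀ hℓ]
  calc muOf τ cF * n = (1 - (n : ℝ) ^ (α - 1))⁻¹ * ((1 - (n : ℝ) ^ (α - 1)) * (muOf τ cF * n)) :=
        (inv_mul_cancel_left₀ hgap.ne' _).symm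
    _ ≤ _ := by gcongr

lemma twoPathSum_le_sum_expKernel (hcF : 0 ≤ cF) (lam : ℝ) (n i j : ℕ) :
    let K := (cF * (n : ℝ) ^ alphaOf τ) ^ 2 / ellFn τ cF n
    twoPathSum τ cF lam n i j ≤ piC τ lam n ^ 2 * (K * (j : ℝ) ^ (-alphaOf τ)) *
      ∑ v ∈ Finset.Icc 1 n, expKernel (alphaOf τ) (K * (i : ℝ) ^ (-alphaOf τ)) v := by
  intro K
  have hK : 0 ≤ K := by
    have : 0 ≤ ellFn τ cF n := by rw [ellFn_eq]; positivity
    positivity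
  have hweight : ∀ u v : ℕ, wFn τ cF n u * wFn τ cF n v / ellFn τ cF n
      = K * (u : ℝ) ^ (-alphaOf τ) * (v : ℝ) ^ (-alphaOf τ) := fun u v => by
    simp only [K, wFn_eq]; ring
  rw [Finset.mul_sum]
  refine (Finset.sum_le_sum fun v _ => ?_).trans
    (Finset.sum_le_sum_of_subset_of_nonneg Finset.sdiff_subset fun v _ _ => ?_)
  · rw [hweight, hweight, mul_right_comm K ((v : ℝ) ^ (-alphaOf τ))]
    have hv := rpow_nonneg v.cast_nonneg (-alphaOf τ)
    have hi := rpow_nonneg i.cast_nonneg (-alphaOf τ)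
    have hj := rpow_nonneg j.cast_nonneg (-alphaOf τ)
    calc piC τ lam n ^ 2 * (1 - exp (-(K * (i : ℝ) ^ (-alphaOf τ) * (v : ℝ) ^ (-alphaOf τ)))) *
          (1 - exp (-(K * (j : ℝ) ^ (-alphaOf τ) * (v : ℝ) ^ (-alphaOf τ))))
        ≤ piC τ lam n ^ 2 * (1 - exp (-(K * (i : ℝ) ^ (-alphaOf τ) * (v : ℝ) ^ (-alphaOf τ)))) *
          (K * (j : ℝ) ^ (-alphaOf τ) * (v : ℝ) ^ (-alphaOf τ)) := by
          have := one_sub_exp_neg_nonneg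
            (x := K * (i : ℝ) ^ (-alphaOf τ) * (v : ℝ) ^ (-alphaOf τ)) (by positivity)
          gcongr
          exact one_sub_exp_neg_le _
      _ = _ := by simp only [expKernel]; ring
  · exact mul_nonneg (by positivity) (expKernel_nonneg (by positivity) v.cast_nonneg)

lemma rpow_muOf_mul_mul_BalphaOf (hτ : τ ∈ Set.Ioo 2 3) (hcF : 0 < cF) {x : ℝ} (hx : 0 ≤ x) :
    (muOf τ cF * x) ^ (1 / alphaOf τ) * BalphaOf τ cF
      = (cF ^ 2 * x) ^ (1 / alphaOf τ) * ((alphaOf τ)⁻¹ * AalphaOf τ) := by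
  have hμ : 0 < muOf τ cF := div_pos hcF (by linarith [(alphaOf_mem_Ioo hτ).2])
  have hcF2 : cF ^ (2 / alphaOf τ) = (cF ^ 2) ^ (1 / alphaOf τ) := by
    rw [← rpow_natCast, ← rpow_mul hcF.le]; congr 1; push_cast; ring
  have : 0 < muOf τ cF ^ (1 / alphaOf τ) := rpow_pos_of_pos hμ _
  rw [BalphaOf, hcF2, mul_rpow hμ.le hx, mul_rpow (by positivity) hx]
  field_simp

lemma twoPathSum_le_rpow_mul (hτ : τ ∈ Set.Ioo 2 3) (hcF : 0 < cF) (lam : ℝ) {n i : ℕ}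
    (hn : 1 ≤ n) (hi : 1 ≤ i) (j : ℕ) :
    twoPathSum τ cF lam n i j ≤ lam ^ 2 * (muOf τ cF * n / ellFn τ cF n) ^ (1 / alphaOf τ) *
      (BalphaOf τ cF * (i : ℝ) ^ (-(1 - alphaOf τ)) * (j : ℝ) ^ (-alphaOf τ)) := by
  obtain ⟨hα12, hα1⟩ := alphaOf_mem_Ioo hτ
  have hα0 : 0 < alphaOf τ := by linarith
  have hℓ := ellFn_pos (τ := τ) hcF hn
  have hN : (0 : ℝ) < n := by exact_mod_cast hn
  have hI : (0 : ℝ) < i := by exact_mod_cast hi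
  set α := alphaOf τ with hα
  set K := (cF * (n : ℝ) ^ α) ^ 2 / ellFn τ cF n
  have hK : 0 < K := by positivity
  have ha : 0 < K * (i : ℝ) ^ (-α) := by positivity
  have hscale := rpow_one_div_sub_two_mul_mul_rpow (c := cF) hα0.ne' hN hℓ hI.le
  calc twoPathSum τ cF lam n i j
      ≤ piC τ lam n ^ 2 * (K * (j : ℝ) ^ (-α)) *
          ∑ v ∈ Finset.Icc 1 n, expKernel α (K * (i : ℝ) ^ (-α)) v :=
        twoPathSum_le_sum_expKernel hcF.le lam n i j
    _ ≤ piC τ lam n ^ 2 * (K * (j : ℝ) ^ (-α)) *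
          ∫ x in Set.Ioi 0, expKernel α (K * (i : ℝ) ^ (-α)) x := by
        have := rpow_nonneg j.cast_nonneg (-α)
        gcongr
        exact (antitoneOn_expKernel (by linarith) ha.le).sum_Icc_le_integral_Ioi
          (integrableOn_expKernel hα12 hα1 ha.le)
          (fun x hx => expKernel_nonneg ha.le (le_of_lt hx)) n
    _ = lam ^ 2 * (cF ^ 2 * n / ellFn τ cF n) ^ (1 / α) * (i : ℝ) ^ (-(1 - α)) *
          (j : ℝ) ^ (-α) * (α⁻¹ * AalphaOf τ) := by
        have hA : ∫ z in Set.Ioi 0, (1 - exp (-z)) * z ^ (-(1 / α)) = AalphaOf τ := rfl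
        rw [integral_expKernel hα0 ha, piC_sq, hA, ← hα]
        linear_combination (lam ^ 2 * (j : ℝ) ^ (-α) * (α⁻¹ * AalphaOf τ)) * hscale
    _ = _ := by
        rw [mul_div_assoc, mul_div_assoc]
        linear_combination (-(lam ^ 2 * (i : ℝ) ^ (-(1 - α)) * (j : ℝ) ^ (-α))) *
          rpow_muOf_mul_mul_BalphaOf hτ hcF (x := n / ellFn τ cF n) (by positivity)

lemma hOf_nonneg (hτ : τ ∈ Set.Ioo 2 3) (hcF : 0 < cF) {x y : ℝ} (hx : 0 ≤ x) (hy : 0 ≤ y) :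
    0 ≤ hOf τ cF x y := by
  obtain ⟨hα12, hα1⟩ := alphaOf_mem_Ioo hτ
  have hA : 0 ≤ AalphaOf τ := setIntegral_nonneg measurableSet_Ioi fun z (hz : 0 < z) =>
    mul_nonneg (one_sub_exp_neg_nonneg hz.le) (rpow_nonneg hz.le _)
  have hμ : 0 < muOf τ cF := div_pos hcF (by linarith)
  have : 0 < alphaOf τ := by linarith
  have : 0 ≤ min x y := le_min hx hy
  have : 0 ≤ max x y := le_max_of_le_left hx
  rw [hOf, BalphaOf]
  positivity

lemma twoPathSum_le_hOf (hτ : τ ∈ Set.Ioo 2 3) (hcF : 0 < cF) (lam : ℝ) {n i j : ℕ}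
    (hn : 1 ≤ n) (hi : 1 ≤ i) (hj : 1 ≤ j) :
    twoPathSum τ cF lam n i j
      ≤ lam ^ 2 * (muOf τ cF * n / ellFn τ cF n) ^ (1 / alphaOf τ) * hOf τ cF i j := by
  rcases le_total i j with h | h
  · rw [hOf, min_eq_left (by exact_mod_cast h), max_eq_right (by exact_mod_cast h)]
    exact twoPathSum_le_rpow_mul hτ hcF lam hn hi j
  · rw [twoPathSum_comm, hOf, min_eq_right (by exact_mod_cast h),
      max_eq_left (by exact_mod_cast h)]
    exact twoPathSum_le_rpow_mul hτ hcF lam hn hj i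

end

/-- For every `ε > 0` there is `n₀ = n₀(ε)` (independent of `λ`, `i`, `j`)
such that for all `n ≥ n₀`, `λ > 0` and distinct `i, j ∈ [n]`:
`∑_{v ∈ [n] \ {i,j}} π_c(λ)² (1 − e^{−w_i w_v/ℓ_n})(1 − e^{−w_v w_j/ℓ_n}) ≤ (1+ε) λ² h(i,j)`. -/
theorem stmt7 (τ cF : ℝ) (hτ : τ ∈ Set.Ioo (2 : ℝ) 3) (hcF : 0 < cF)
    (ε : ℝ) (hε : 0 < ε) :
    ∃ n₀ : ℕ, ∀ n : ℕ, n₀ ≤ n → ∀ lam : ℝ, 0 < lam →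
      ∀ i ∈ Finset.Icc 1 n, ∀ j ∈ Finset.Icc 1 n, i ≠ j →
        ∑ v ∈ Finset.Icc 1 n \ {i, j},
            piC τ lam n ^ 2 *
              (1 - Real.exp (-(wFn τ cF n i * wFn τ cF n v / ellFn τ cF n))) *
              (1 - Real.exp (-(wFn τ cF n v * wFn τ cF n j / ellFn τ cF n)))
          ≤ (1 + ε) * lam ^ 2 * hOf τ cF (i : ℝ) (j : ℝ) := by
  obtain ⟨n₀, hn₀⟩ := eventually_atTop.mp (eventually_rpow_muOf_mul_div_ellFn_le hτ hcF hε)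
  refine ⟨n₀, fun n hn lam _ i hi j hj _ => ?_⟩
  rw [Finset.mem_Icc] at hi hj
  have hh : 0 ≤ hOf τ cF i j := hOf_nonneg hτ hcF i.cast_nonneg j.cast_nonneg
  refine (twoPathSum_le_hOf hτ hcF lam (hi.1.trans hi.2) hi.1 hj.1).trans ?_
  rw [mul_comm (1 + ε)]
  gcongr
  exact hn₀ n hn
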